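/- Conservativity: for any S ⊆ {c,w} and M ⊆ {k,t,4}, the system !^S_M MacLL is a conservative extension of MacLL, i.e., a !-free sequent Γ ⇒ C (no occurrence of ! anywhere) is derivable in !^S_M MacLL if and only if it is derivable in MacLL. -/

import Mathlib

/-- Multiplicative exponential formulas: variables, unit, !, ⊗, →, ←. -/
inductive Fm : Type where
  | var : Nat → Fm
  | one : Fm
  | bang : Fm → Fm
  | tens : Fm → Fm → Fm
  | arr : Fm → Fm → Fm      -- A → B
  | larr : Fm → Fm → Fm     -- B ← A
deriving DecidableEq

/-- Structures: binary trees of formulas, allowing the empty structure. -/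
inductive Str : Type where
  | emp : Str
  | leaf : Fm → Str
  | comma : Str → Str → Str
deriving DecidableEq

/-- One-hole structure contexts. -/
inductive Ctx : Type where
  | hole : Ctx
  | commaL : Ctx → Str → Ctx
  | commaR : Str → Ctx → Ctx

/-- Plug a structure into the hole of a context. -/
def Ctx.fill : Ctx → Str → Str
  | .hole, Δ => Δ
  | .commaL c Δ, P => .comma (c.fill P) Δ
  | .commaR Γ c, P => .comma Γ (c.fill P)

/-- !Γ : bang every leaf formula of a structure. -/
def bangStr : Str → Str
  | .emp => .emp
  | .leaf A => .leaf (.bang A)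
  | .comma a b => .comma (bangStr a) (bangStr b)

/-- `StarBang Γ Γ'` : Γ' is Γ with some subset of its leaf formulas banged (!*Γ). -/
inductive StarBang : Str → Str → Prop where
  | emp : StarBang .emp .emp
  | leaf (A : Fm) : StarBang (.leaf A) (.leaf A)
  | leafBang (A : Fm) : StarBang (.leaf A) (.leaf (.bang A))
  | comma {a a' b b' : Str} : StarBang a a' → StarBang b b' →
      StarBang (.comma a b) (.comma a' b')

/-- Proper structures: nonempty binary trees of formulas (no occurrence of the
empty structure), matching the grammar Γ ::= (Γ,Γ) | F. -/
inductive Str.proper : Str → Prop where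
  | leaf (A : Fm) : (Str.leaf A).proper
  | comma {a b : Str} : a.proper → b.proper → (Str.comma a b).proper

/-- Flags selecting the optional modal/structural rules of a system. -/
structure Flags where
  bangL : Bool := false
  bangR : Bool := false
  bangRK : Bool := false
  bangR4 : Bool := false
  bangRK4 : Bool := false
  contr : Bool := false     -- single-formula contraction C
  contrK : Bool := false    -- structural contraction CK
  weak : Bool := false      -- weakening W
  cut : Bool := false

/-- Sequent derivability in MacLL extended by the rules selected by `fl`,
with nonlogical axioms `Ax`. -/
inductive Der (fl : Flags) (Ax : Set (Str × Fm)) : Str → Fm → Prop where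
  | ax {Γ : Str} {C : Fm} : (Γ, C) ∈ Ax → Der fl Ax Γ C
  | init (A : Fm) : Der fl Ax (.leaf A) A
  | tensL (Γ : Ctx) {A B C : Fm} :
      Der fl Ax (Γ.fill (.comma (.leaf A) (.leaf B))) C →
      Der fl Ax (Γ.fill (.leaf (.tens A B))) C
  | tensR {Γ Δ : Str} {A B : Fm} :
      Der fl Ax Γ A → Der fl Ax Δ B → Der fl Ax (.comma Γ Δ) (.tens A B)
  | arrL (Γ : Ctx) {Δ : Str} {A B C : Fm} :
      Der fl Ax Δ A → Der fl Ax (Γ.fill (.leaf B)) C →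
      Der fl Ax (Γ.fill (.comma Δ (.leaf (.arr A B)))) C
  | arrR {Γ : Str} {A B : Fm} :
      Der fl Ax (.comma (.leaf A) Γ) B → Der fl Ax Γ (.arr A B)
  | larrL (Γ : Ctx) {Δ : Str} {A B C : Fm} :
      Der fl Ax Δ A → Der fl Ax (Γ.fill (.leaf B)) C →
      Der fl Ax (Γ.fill (.comma (.leaf (.larr B A)) Δ)) C
  | larrR {Γ : Str} {A B : Fm} :
      Der fl Ax (.comma Γ (.leaf A)) B → Der fl Ax Γ (.larr B A)
  | oneL (Γ : Ctx) {C : Fm} :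
      Der fl Ax (Γ.fill .emp) C → Der fl Ax (Γ.fill (.leaf .one)) C
  | oneR : Der fl Ax .emp .one
  | bangL (Γ : Ctx) {A C : Fm} : fl.bangL = true →
      Der fl Ax (Γ.fill (.leaf A)) C → Der fl Ax (Γ.fill (.leaf (.bang A))) C
  | bangR {A C : Fm} : fl.bangR = true →
      Der fl Ax (.leaf A) C → Der fl Ax (.leaf (.bang A)) (.bang C)
  | bangRK {Γ : Str} {C : Fm} : fl.bangRK = true →
      Der fl Ax Γ C → Der fl Ax (bangStr Γ) (.bang C)
  | bangR4 {A C : Fm} : fl.bangR4 = true →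
      Der fl Ax (.leaf (.bang A)) C → Der fl Ax (.leaf (.bang A)) (.bang C)
  | bangRK4 {Γ Γ' : Str} {C : Fm} : fl.bangRK4 = true →
      StarBang Γ Γ' → Der fl Ax Γ' C → Der fl Ax (bangStr Γ) (.bang C)
  | contr (Γ : Ctx) {A : Fm} {C : Fm} : fl.contr = true →
      Der fl Ax (Γ.fill (.comma (.leaf (.bang A)) (.leaf (.bang A)))) C →
      Der fl Ax (Γ.fill (.leaf (.bang A))) C
  | contrK (Γ : Ctx) {Δ : Str} {C : Fm} : fl.contrK = true → Δ.proper →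
      Der fl Ax (Γ.fill (.comma (bangStr Δ) (bangStr Δ))) C →
      Der fl Ax (Γ.fill (bangStr Δ)) C
  | weak (Γ : Ctx) {A C : Fm} : fl.weak = true →
      Der fl Ax (Γ.fill .emp) C → Der fl Ax (Γ.fill (.leaf (.bang A))) C
  | cut (Γ : Ctx) {Δ : Str} {A C : Fm} : fl.cut = true →
      Der fl Ax Δ A → Der fl Ax (Γ.fill (.leaf A)) C →
      Der fl Ax (Γ.fill Δ) C

/-- Plain MacLL (no modal or structural rules, no cut). -/
def macll : Flags := {}
/-- Translation τ into !-free formulas: τ(p_i)=p_{2i+1}, τ(!A)=p_{2⌈A⌉}. -/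
def tau (enc : Fm → Nat) : Fm → Fm
  | .var i => .var (2 * i + 1)
  | .one => .one
  | .bang A => .var (2 * enc A)
  | .tens A B => .tens (tau enc A) (tau enc B)
  | .arr A B => .arr (tau enc A) (tau enc B)
  | .larr A B => .larr (tau enc A) (tau enc B)

/-- Leafwise extension of τ to structures. -/
def tauStr (enc : Fm → Nat) : Str → Str
  | .emp => .emp
  | .leaf A => .leaf (tau enc A)
  | .comma a b => .comma (tauStr enc a) (tauStr enc b)

/-- The set of propositional variables of a formula. -/
def Fm.vars : Fm → Set Nat
  | .var i => {i}
  | .one => ∅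
  | .bang A => A.vars
  | .tens A B => A.vars ∪ B.vars
  | .arr A B => A.vars ∪ B.vars
  | .larr A B => A.vars ∪ B.vars

def Str.vars : Str → Set Nat
  | .emp => ∅
  | .leaf A => A.vars
  | .comma a b => a.vars ∪ b.vars

/-- Subformulas of a formula. -/
def Fm.sub : Fm → Set Fm
  | .var i => {.var i}
  | .one => {.one}
  | .bang A => insert (.bang A) A.sub
  | .tens A B => insert (.tens A B) (A.sub ∪ B.sub)
  | .arr A B => insert (.arr A B) (A.sub ∪ B.sub)
  | .larr A B => insert (.larr A B) (A.sub ∪ B.sub)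

/-- The yield of a structure: the set of formulas occurring in it. -/
def Str.fms : Str → Set Fm
  | .emp => ∅
  | .leaf A => {A}
  | .comma a b => a.fms ∪ b.fms

/-- !-free formulas. -/
def Fm.bangFree : Fm → Prop
  | .var _ => True
  | .one => True
  | .bang _ => False
  | .tens A B => A.bangFree ∧ B.bangFree
  | .arr A B => A.bangFree ∧ B.bangFree
  | .larr A B => A.bangFree ∧ B.bangFree

def Str.bangFree : Str → Prop
  | .emp => True
  | .leaf A => A.bangFree
  | .comma a b => a.bangFree ∧ b.bangFree

/-- The flags of the cut-free system !^S_M MacLL, for S ⊆ {c,w} and M ⊆ {k,t,4}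
given by Booleans c, w, k, t, f4. -/
def sysFlags (c w k t f4 : Bool) : Flags where
  bangL := t
  bangR := !k && !f4
  bangRK := k && !f4
  bangR4 := !k && f4
  bangRK4 := k && f4
  contr := c && !k
  contrK := c && k
  weak := w
  cut := false

/-- MacLL with cut (used with nonlogical axioms). -/
def macllCut : Flags := { cut := true }

namespace Ctx

theorem bangFree_of_bangFree_fill (G : Ctx) {D : Str} (h : (G.fill D).bangFree) :
    D.bangFree := by
  induction G with
  | hole => exact h
  | commaL _ _ ih => exact ih h.1
  | commaR _ _ ih => exact ih h.2

theorem bangFree_fill_of_bangFree_fill (G : Ctx) {D D' : Str} (h : (G.fill D).bangFree)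
    (h' : D'.bangFree) : (G.fill D').bangFree := by
  induction G with
  | hole => exact h'
  | commaL _ _ ih => exact ⟨ih h.1, h.2⟩
  | commaR _ _ ih => exact ⟨h.1, ih h.2⟩

end Ctx

theorem Str.proper.not_bangFree_bangStr {D : Str} (hD : D.proper) : ¬ (bangStr D).bangFree := by
  induction hD with
  | leaf A => exact id
  | comma _ _ ih _ => exact fun h => ih h.1

namespace Der

variable {fl : Flags} {Ax : Set (Str × Fm)}

theorem of_macll {Γ : Str} {C : Fm} (h : Der macll Ax Γ C) : Der fl Ax Γ C := by
  induction h with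
  | ax h => exact .ax h
  | init A => exact .init A
  | tensL G _ ih => exact .tensL G ih
  | tensR _ _ ih₁ ih₂ => exact .tensR ih₁ ih₂
  | arrL G _ _ ih₁ ih₂ => exact .arrL G ih₁ ih₂
  | arrR _ ih => exact .arrR ih
  | larrL G _ _ ih₁ ih₂ => exact .larrL G ih₁ ih₂
  | larrR _ ih => exact .larrR ih
  | oneL G _ ih => exact .oneL G ih
  | oneR => exact .oneR
  | bangL _ hf | bangR hf | bangRK hf | bangR4 hf | bangRK4 hf | contr _ hf | contrK _ hf
    | weak _ hf | cut _ hf => cases hf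

/-- Cut-free rules have the subformula property, so a !-free conclusion has !-free premises,
and no rule introducing or manipulating `!` has a !-free conclusion. -/
theorem macll_of_bangFree (hcut : fl.cut = false) {Γ : Str} {C : Fm} (h : Der fl Ax Γ C)
    (hΓ : Γ.bangFree) (hC : C.bangFree) : Der macll Ax Γ C := by
  induction h with
  | ax h => exact .ax h
  | init A => exact .init A
  | tensL G _ ih =>
    have hAB := G.bangFree_of_bangFree_fill hΓ
    exact .tensL G (ih (G.bangFree_fill_of_bangFree_fill hΓ hAB) hC)
  | tensR _ _ ih₁ ih₂ => exact .tensR (ih₁ hΓ.1 hC.1) (ih₂ hΓ.2 hC.2)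
  | arrL G _ _ ih₁ ih₂ =>
    have hΔAB := G.bangFree_of_bangFree_fill hΓ
    exact .arrL G (ih₁ hΔAB.1 hΔAB.2.1)
      (ih₂ (G.bangFree_fill_of_bangFree_fill hΓ hΔAB.2.2) hC)
  | arrR _ ih => exact .arrR (ih ⟨hC.1, hΓ⟩ hC.2)
  | larrL G _ _ ih₁ ih₂ =>
    have hBAΔ := G.bangFree_of_bangFree_fill hΓ
    exact .larrL G (ih₁ hBAΔ.2 hBAΔ.1.2)
      (ih₂ (G.bangFree_fill_of_bangFree_fill hΓ hBAΔ.1.1) hC)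
  | larrR _ ih => exact .larrR (ih ⟨hΓ, hC.2⟩ hC.1)
  | oneL G _ ih => exact .oneL G (ih (G.bangFree_fill_of_bangFree_fill hΓ trivial) hC)
  | oneR => exact .oneR
  | bangL G _ _ | contr G _ _ | weak G _ _ => exact (G.bangFree_of_bangFree_fill hΓ : False).elim
  | contrK G _ hD _ => exact (hD.not_bangFree_bangStr (G.bangFree_of_bangFree_fill hΓ)).elim
  | bangR _ _ | bangRK _ _ | bangR4 _ _ | bangRK4 _ _ _ => exact (hC : False).elim
  | cut _ hf => cases hcut ▸ hf

end Der

/-- Conservativity: for any S ⊆ {c,w} and M ⊆ {k,t,4}, a !-free sequent is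
derivable in !^S_M MacLL iff it is derivable in MacLL. -/
theorem stmt13 (c w k t f4 : Bool) (Γ : Str) (C : Fm)
    (hΓ : Γ.bangFree) (hC : C.bangFree) :
    Der (sysFlags c w k t f4) ∅ Γ C ↔ Der macll ∅ Γ C :=
  ⟨fun h => h.macll_of_bangFree rfl hΓ hC, Der.of_macll⟩
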